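/- arXiv:2601.23125 — 2 statements merged into one kernel-verified Lean document; each statement's English description precedes it below -/
import Mathlib

section
/- Let f ∈ ℂ[x₁,…,xₙ] be a nonzero polynomial, ℓ ∈ ℕ, ω ∈ ℝⁿ∖{0}, and let v ∈ ℝⁿ satisfy ⟨v,γ⟩ = ⟨v,γ'⟩ for all γ, γ' ∈ Supp(f) with ⟨γ,ω⟩ = ⟨γ',ω⟩ = ord_f(ω); fix any γ_τ ∈ Supp(f) with ⟨γ_τ,ω⟩ = ord_f(ω). Then there exists a polynomial-coefficient differential operator Q = Σ_{j=1}^n v_j x_j ∂_j − ℓ⟨v,γ_τ⟩ + Σ_{(α,β)∈A} c_{αβ} x^α ∂^β, with A finite and every (α,β) ∈ A satisfying ⟨ω,β⟩ − ⟨ω,α⟩ < 0, such that Q • f^ℓ = 0 as a polynomial identity. In particular, taking v = ω, the operator ω₁x₁∂₁+⋯+ωₙxₙ∂ₙ − ℓ·ord_f(ω) is the (−ω,ω)-initial form of an operator annihilating f^ℓ. -/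
open MvPolynomial
open scoped Classical Pointwise

noncomputable def evalR {n : ℕ} (f : MvPolynomial (Fin n) ℂ) (x : Fin n → ℝ) : ℂ :=
  MvPolynomial.eval (fun i => (x i : ℂ)) f

noncomputable def pd {n : ℕ} (i : Fin n) (g : (Fin n → ℝ) → ℂ) : (Fin n → ℝ) → ℂ :=
  fun x => fderiv ℝ g x (Pi.single i 1)

noncomputable def pdIter {n : ℕ} (β : Fin n → ℕ) (g : (Fin n → ℝ) → ℂ) : (Fin n → ℝ) → ℂ :=
  ((List.ofFn (fun i : Fin n => (pd i)^[β i])).foldr (· ∘ ·) id) g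

noncomputable def pdPoly {n : ℕ} (β : Fin n → ℕ) (f : MvPolynomial (Fin n) ℂ) :
    MvPolynomial (Fin n) ℂ :=
  ((List.ofFn (fun i : Fin n => (fun h => MvPolynomial.pderiv i h)^[β i])).foldr (· ∘ ·) id) f

noncomputable def newton {n : ℕ} (f : MvPolynomial (Fin n) ℂ) : Set (Fin n → ℝ) :=
  convexHull ℝ ((fun γ : Fin n →₀ ℕ => fun i => (γ i : ℝ)) '' ↑f.support)

noncomputable def ordW {n : ℕ} (f : MvPolynomial (Fin n) ℂ) (ω : Fin n → ℝ) : ℝ :=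
  sInf ((fun γ : Fin n →₀ ℕ => ∑ i, (γ i : ℝ) * ω i) '' ↑f.support)

noncomputable def initForm {n : ℕ} (ω : Fin n → ℝ) (f : MvPolynomial (Fin n) ℂ) :
    MvPolynomial (Fin n) ℂ :=
  ∑ γ ∈ f.support.filter (fun γ => ∑ i, (γ i : ℝ) * ω i = ordW f ω),
    MvPolynomial.monomial γ (MvPolynomial.coeff γ f)

/-! On the lowest `ω`-face of `f^ℓ` the exponents have `v`-weight `ℓ⟨v, γ_τ⟩`, so the Euler-type
operator `∑ v_j x_j ∂_j - ℓ⟨v, γ_τ⟩` kills the lowest `ω`-part of `f^ℓ` and leaves only monomials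
`x^δ` of `ω`-weight above `ℓ · ord_f(ω)`. Fix an exponent `μ` of `f^ℓ` on the face; it exists
because the lowest part of `f^ℓ` is the `ℓ`-th power of that of `f`. Every such `x^δ` is then
obtained from `f^ℓ` by a combination of the operators `x^((δ-μ)⁺+k) ∂^((μ-δ)⁺+k)`, all of weight
`⟨ω, μ⟩ - ⟨ω, δ⟩ < 0`: such an operator sends `x^γ` to a descending-factorial multiple of
`x^(γ+δ-μ)`, and the combination can be chosen so that these multiples vanish for all exponents
`γ ≠ μ` of `f^ℓ`. -/

open Finsupp (weight)

section Weight

variable {σ R : Type*}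

lemma weight_eq_sum_mul [Fintype σ] (w : σ → ℝ) (γ : σ →₀ ℕ) :
    weight w γ = ∑ i, (γ i : ℝ) * w i := by
  simp [Finsupp.weight_eq_sum, nsmul_eq_mul]

lemma forall_mem_support_mul [CommSemiring R] {P Q S : (σ →₀ ℕ) → Prop}
    (hPQ : ∀ α β, P α → Q β → S (α + β)) {p q : MvPolynomial σ R}
    (hp : ∀ α ∈ p.support, P α) (hq : ∀ β ∈ q.support, Q β) :
    ∀ γ ∈ (p * q).support, S γ := by
  intro γ hγ
  obtain ⟨α, hα, β, hβ, rfl⟩ := Finset.mem_add.mp (support_mul p q hγ)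
  exact hPQ α β (hp α hα) (hq β hβ)

lemma weight_tsub_sub_weight_tsub (w : σ → ℝ) (μ δ : σ →₀ ℕ) :
    weight w (μ - δ) - weight w (δ - μ) = weight w μ - weight w δ := by
  have h : μ - δ + δ = δ - μ + μ := by
    ext i
    simp only [Finsupp.add_apply, Finsupp.tsub_apply]
    omega
  have := congrArg (weight w) h
  simp only [map_add] at this
  linarith

def IsConstOnFace [CommSemiring R] (w : σ → ℝ) (a : ℝ) (v : σ → ℝ) (b : ℝ)
    (p : MvPolynomial σ R) : Prop :=
  ∀ γ ∈ p.support, a ≤ weight w γ ∧ (weight w γ = a → weight v γ = b)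

namespace IsConstOnFace

variable [CommSemiring R] {w v : σ → ℝ} {a b a' b' : ℝ} {p q : MvPolynomial σ R}

lemma mul (hp : IsConstOnFace w a v b p) (hq : IsConstOnFace w a' v b' q) :
    IsConstOnFace w (a + a') v (b + b') (p * q) := by
  refine forall_mem_support_mul (fun α β ⟨hαa, hαb⟩ ⟨hβa, hβb⟩ => ?_) hp hq
  simp only [map_add]
  refine ⟨add_le_add hαa hβa, fun h => ?_⟩
  rw [hαb (by linarith), hβb (by linarith)]

lemma one : IsConstOnFace w 0 v 0 (1 : MvPolynomial σ R) := by
  intro γ hγ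
  rw [Finset.mem_singleton.mp (support_monomial_subset hγ)]
  simp

lemma pow (hp : IsConstOnFace w a v b p) (ℓ : ℕ) :
    IsConstOnFace w (ℓ * a) v (ℓ * b) (p ^ ℓ) := by
  induction ℓ with
  | zero => simpa using one
  | succ ℓ ih => simpa [pow_succ, add_mul] using ih.mul hp

end IsConstOnFace

section LowestComponent

variable [CommRing R] {w : σ → ℝ} {a : ℝ} {p : MvPolynomial σ R}

lemma lt_weight_of_mem_support_sub_weightedHomogeneousComponent
    (hp : ∀ γ ∈ p.support, a ≤ weight w γ) :
    ∀ γ ∈ (p - weightedHomogeneousComponent w a p).support, a < weight w γ := by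
  intro γ hγ
  rw [mem_support_iff, coeff_sub, coeff_weightedHomogeneousComponent] at hγ
  split_ifs at hγ with h
  · exact absurd (sub_self _) hγ
  · exact lt_of_le_of_ne (hp γ (by simpa using hγ)) (Ne.symm h)

lemma lt_weight_of_mem_support_pow_sub_pow (hp : ∀ γ ∈ p.support, a ≤ weight w γ) (ℓ : ℕ) :
    ∀ γ ∈ (p ^ ℓ - weightedHomogeneousComponent w a p ^ ℓ).support, ℓ * a < weight w γ := by
  set h := weightedHomogeneousComponent w a p
  have hh : ∀ k : ℕ, ∀ γ ∈ (h ^ k).support, weight w γ = k * a := fun k γ hγ => by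
    simpa using (weightedHomogeneousComponent_isWeightedHomogeneous a p).pow k
      (mem_support_iff.mp hγ)
  induction ℓ with
  | zero => simp
  | succ ℓ ih =>
    have hsplit : p ^ (ℓ + 1) - h ^ (ℓ + 1) = (p ^ ℓ - h ^ ℓ) * p + h ^ ℓ * (p - h) := by ring
    intro γ hγ
    rw [hsplit] at hγ
    rcases Finset.mem_union.mp (support_add hγ) with hγ | hγ
    · refine forall_mem_support_mul (S := (↑(ℓ + 1) * a < weight w ·))
        (fun α β (hα : _ < _) (hβ : _ ≤ _) => ?_) ih hp γ hγ
      push_cast; rw [map_add]; linarith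
    · refine forall_mem_support_mul (S := (↑(ℓ + 1) * a < weight w ·))
        (fun α β (hα : _ = _) (hβ : _ < _) => ?_) (hh ℓ)
        (lt_weight_of_mem_support_sub_weightedHomogeneousComponent hp) γ hγ
      push_cast; rw [map_add]; linarith

lemma exists_mem_support_pow_weight_eq [IsDomain R] (hp : ∀ γ ∈ p.support, a ≤ weight w γ)
    {μ₀ : σ →₀ ℕ} (hμ₀ : μ₀ ∈ p.support) (hμ₀a : weight w μ₀ = a) (ℓ : ℕ) :
    ∃ μ ∈ (p ^ ℓ).support, weight w μ = ℓ * a := by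
  set h := weightedHomogeneousComponent w a p
  have hh : h ≠ 0 := fun h0 => mem_support_iff.mp hμ₀ <| by
    simpa [h, hμ₀a, coeff_weightedHomogeneousComponent] using congrArg (coeff μ₀) h0
  obtain ⟨μ, hμ⟩ := support_nonempty.mpr (pow_ne_zero ℓ hh)
  have hμa : weight w μ = ℓ * a := by
    simpa using (weightedHomogeneousComponent_isWeightedHomogeneous a p).pow ℓ
      (mem_support_iff.mp hμ)
  have hμ_sub : coeff μ (p ^ ℓ - h ^ ℓ) = 0 := by
    by_contra hne
    exact (lt_weight_of_mem_support_pow_sub_pow hp ℓ μ (mem_support_iff.mpr hne)).ne' hμa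
  refine ⟨μ, ?_, hμa⟩
  rw [mem_support_iff, ← sub_add_cancel (p ^ ℓ) (h ^ ℓ), coeff_add, hμ_sub, zero_add]
  exact mem_support_iff.mp hμ

end LowestComponent

end Weight

section DescFactorial

variable {σ : Type*} [Fintype σ]

def descFactorialProd (k γ : σ →₀ ℕ) : ℕ := ∏ i, (γ i).descFactorial (k i)

lemma descFactorialProd_eq_zero_iff {k γ : σ →₀ ℕ} : descFactorialProd k γ = 0 ↔ ¬ k ≤ γ := by
  simp [descFactorialProd, Finset.prod_eq_zero_iff, Nat.descFactorial_eq_zero_iff_lt,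
    Finsupp.le_def]

lemma descFactorialProd_add (r k γ : σ →₀ ℕ) :
    descFactorialProd (r + k) γ = descFactorialProd r γ * descFactorialProd k (γ - r) := by
  rw [descFactorialProd, descFactorialProd, descFactorialProd, ← Finset.prod_mul_distrib]
  refine Finset.prod_congr rfl fun i _ => ?_
  rw [Finsupp.add_apply, Finsupp.tsub_apply, mul_comm, ← Nat.descFactorial_mul_descFactorial
    (Nat.le_add_right (r i) (k i)), Nat.add_sub_cancel_left]

variable {K : Type*} [Field K] [CharZero K]

/-- On `S × S` the matrix `descFactorialProd k γ` is triangular for the partial order of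
`σ →₀ ℕ`, with nonzero diagonal. -/
lemma exists_sum_descFactorialProd_eq (S : Finset (σ →₀ ℕ)) (u : (σ →₀ ℕ) → K) :
    ∃ e : (σ →₀ ℕ) → K, ∀ γ ∈ S, ∑ k ∈ S, e k * descFactorialProd k γ = u γ := by
  induction S using Finset.strongInduction with
  | H S ih =>
    rcases S.eq_empty_or_nonempty with rfl | hS
    · exact ⟨0, by simp⟩
    obtain ⟨m, hm⟩ := Finset.exists_maximal hS
    obtain ⟨e, he⟩ := ih (S.erase m) (Finset.erase_ssubset hm.1)
    have hmm : (descFactorialProd m m : K) ≠ 0 := by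
      exact_mod_cast mt descFactorialProd_eq_zero_iff.mp (not_not.mpr le_rfl)
    set t := (u m - ∑ k ∈ S.erase m, e k * descFactorialProd k m) / descFactorialProd m m
    refine ⟨Function.update e m t, fun γ hγ => ?_⟩
    rw [← Finset.add_sum_erase S _ hm.1, Function.update_self,
      Finset.sum_congr rfl fun k hk => by rw [Function.update_of_ne (Finset.ne_of_mem_erase hk)]]
    by_cases hγm : γ = m
    · subst hγm
      rw [div_mul_cancel₀ _ hmm, sub_add_cancel]
    · have hmγ : descFactorialProd m γ = 0 :=
        descFactorialProd_eq_zero_iff.mpr fun hle => hγm (le_antisymm (hm.2 hγ hle) hle)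
      rw [hmγ, Nat.cast_zero, mul_zero, zero_add, he γ (Finset.mem_erase.mpr ⟨hγm, hγ⟩)]

lemma exists_sum_descFactorialProd_add_eq_ite (S : Finset (σ →₀ ℕ)) {r μ : σ →₀ ℕ}
    (hr : r ≤ μ) : ∃ (T : Finset (σ →₀ ℕ)) (e : (σ →₀ ℕ) → K), ∀ γ ∈ S,
      ∑ k ∈ T, e k * descFactorialProd (r + k) γ = if γ = μ then 1 else 0 := by
  obtain ⟨e, he⟩ := exists_sum_descFactorialProd_eq (K := K) (S.image (· - r))
    fun η => if η + r = μ then (descFactorialProd r μ : K)⁻¹ else 0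
  refine ⟨S.image (· - r), e, fun γ hγ => ?_⟩
  simp only [descFactorialProd_add, Nat.cast_mul, mul_left_comm _ (descFactorialProd r γ : K),
    ← Finset.mul_sum]
  rw [he _ (Finset.mem_image_of_mem _ hγ)]
  by_cases hrγ : r ≤ γ
  · rw [tsub_add_cancel_of_le hrγ]
    split_ifs with hγμ
    · subst hγμ
      exact mul_inv_cancel₀ <| by
        exact_mod_cast mt descFactorialProd_eq_zero_iff.mp (not_not.mpr hr)
    · exact mul_zero _
  · have hγμ : γ ≠ μ := by rintro rfl; exact hrγ hr
    rw [descFactorialProd_eq_zero_iff.mpr hrγ, Nat.cast_zero, zero_mul, if_neg hγμ]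

end DescFactorial

section Operators

lemma iterate_pderiv_monomial {σ R : Type*} [CommSemiring R] (i : σ) (k : ℕ) (γ : σ →₀ ℕ)
    (c : R) : (⇑(pderiv i))^[k] (monomial γ c) =
      monomial (γ - Finsupp.single i k) (c * (γ i).descFactorial k) := by
  induction k with
  | zero => simp
  | succ k ih =>
    rw [Function.iterate_succ_apply', ih, pderiv_monomial, tsub_tsub, ← Finsupp.single_add,
      Finsupp.tsub_apply, Finsupp.single_eq_same, Nat.descFactorial_succ, Nat.cast_mul]
    ring_nf

lemma list_prod_pow_pderiv_monomial {σ R : Type*} [CommSemiring R] [DecidableEq σ] (β : σ → ℕ)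
    (γ : σ →₀ ℕ) (c : R) {l : List σ} (hl : l.Nodup) :
    (l.map fun i => (pderiv i).toLinearMap ^ β i).prod (monomial γ c) =
      monomial (γ - ∑ i ∈ l.toFinset, Finsupp.single i (β i))
        (c * ∏ i ∈ l.toFinset, ((γ i).descFactorial (β i) : R)) := by
  induction l with
  | nil => simp
  | cons a t ih =>
    obtain ⟨hat, ht⟩ := List.nodup_cons.mp hl
    have hγa : (γ - ∑ i ∈ t.toFinset, Finsupp.single i (β i)) a = γ a := by
      rw [Finsupp.tsub_apply, Finsupp.finsetSum_apply,
        Finset.sum_eq_zero fun i hi => Finsupp.single_eq_of_ne ?_, Nat.sub_zero]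
      rintro rfl; exact hat (List.mem_toFinset.mp hi)
    rw [List.map_cons, List.prod_cons, Module.End.mul_apply, ih ht, Module.End.coe_pow]
    have hat' : a ∉ t.toFinset := mt List.mem_toFinset.mp hat
    rw [Derivation.coeFn_coe, iterate_pderiv_monomial, hγa, List.toFinset_cons,
      Finset.sum_insert hat', Finset.prod_insert hat', tsub_tsub, add_comm (Finsupp.single a _),
      mul_assoc, mul_comm (∏ i ∈ _, _)]

variable {n : ℕ}

lemma pdPoly_eq_list_prod (β : Fin n → ℕ) (g : MvPolynomial (Fin n) ℂ) :
    pdPoly β g = ((List.finRange n).map fun i => (pderiv i).toLinearMap ^ β i).prod g := by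
  have hfoldr : ∀ L : List (Module.End ℂ (MvPolynomial (Fin n) ℂ)),
      (L.map DFunLike.coe).foldr (· ∘ ·) id = ⇑L.prod := by
    intro L
    induction L with
    | nil => rfl
    | cons T L ih => rw [List.map_cons, List.foldr_cons, ih, List.prod_cons, Module.End.coe_mul]
  rw [← hfoldr, List.map_map, pdPoly, List.ofFn_eq_map]
  simp only [Function.comp_def, Module.End.coe_pow, Derivation.coeFn_coe]

lemma pdPoly_monomial (b γ : Fin n →₀ ℕ) (c : ℂ) :
    pdPoly b (monomial γ c) = monomial (γ - b) (c * descFactorialProd b γ) := by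
  rw [pdPoly_eq_list_prod, list_prod_pow_pderiv_monomial _ _ _ (List.nodup_finRange n),
    List.toFinset_finRange, Finsupp.univ_sum_single, descFactorialProd, Nat.cast_prod]

end Operators

section NegWeightSpan

variable {n : ℕ}

lemma pdPoly_sum (b : Fin n → ℕ) {ι : Type*} (s : Finset ι) (g : ι → MvPolynomial (Fin n) ℂ) :
    pdPoly b (∑ i ∈ s, g i) = ∑ i ∈ s, pdPoly b (g i) := by
  simp only [pdPoly_eq_list_prod, map_sum]

lemma monomial_mul_pdPoly_monomial (μ δ k γ : Fin n →₀ ℕ) (c : ℂ) :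
    monomial (δ - μ + k) 1 * pdPoly ⇑(μ - δ + k) (monomial γ c) =
      monomial (γ + δ - μ) (c * descFactorialProd (μ - δ + k) γ) := by
  rw [pdPoly_monomial, monomial_mul, one_mul]
  by_cases h : μ - δ + k ≤ γ
  · rw [show δ - μ + k + (γ - (μ - δ + k)) = γ + δ - μ from ?_]
    ext i
    have hi := h i
    simp only [Finsupp.add_apply, Finsupp.tsub_apply] at hi ⊢
    omega
  · rw [descFactorialProd_eq_zero_iff.mpr h, Nat.cast_zero, mul_zero, map_zero, map_zero]

/-- `x^α ∂^β` has `(-ω, ω)`-weight `⟨ω, β⟩ - ⟨ω, α⟩`; this is the span of the `x^α ∂^β • F`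
of negative weight. -/
noncomputable def negWeightSpan (ω : Fin n → ℝ) (F : MvPolynomial (Fin n) ℂ) :
    Submodule ℂ (MvPolynomial (Fin n) ℂ) :=
  Submodule.span ℂ ((fun p : (Fin n →₀ ℕ) × (Fin n →₀ ℕ) => monomial p.1 1 * pdPoly ⇑p.2 F) ''
    {p | weight ω p.2 < weight ω p.1})

lemma exists_sum_eq_of_mem_negWeightSpan {ω : Fin n → ℝ} {F G : MvPolynomial (Fin n) ℂ}
    (hG : G ∈ negWeightSpan ω F) :
    ∃ (A : Finset ((Fin n →₀ ℕ) × (Fin n →₀ ℕ))) (c : (Fin n →₀ ℕ) × (Fin n →₀ ℕ) → ℂ),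
      (∀ p ∈ A, weight ω p.2 < weight ω p.1) ∧
      ∑ p ∈ A, monomial p.1 (c p) * pdPoly ⇑p.2 F = G := by
  obtain ⟨l, hl, rfl⟩ := (Finsupp.mem_span_image_iff_linearCombination ℂ).mp hG
  refine ⟨l.support, l, fun p hp => hl hp, ?_⟩
  rw [Finsupp.linearCombination_apply, Finsupp.sum]
  refine Finset.sum_congr rfl fun p _ => ?_
  rw [← smul_mul_assoc, smul_monomial, smul_eq_mul, mul_one]

lemma monomial_mem_negWeightSpan {ω : Fin n → ℝ} {F : MvPolynomial (Fin n) ℂ}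
    {μ δ : Fin n →₀ ℕ} (hμ : μ ∈ F.support) (hμδ : weight ω μ < weight ω δ) (c : ℂ) :
    monomial δ c ∈ negWeightSpan ω F := by
  obtain ⟨T, e, he⟩ := exists_sum_descFactorialProd_add_eq_ite (K := ℂ) F.support
    (tsub_le_self : μ - δ ≤ μ)
  have hsum : ∑ k ∈ T, e k • (monomial (δ - μ + k) 1 * pdPoly ⇑(μ - δ + k) F) =
      monomial δ (coeff μ F) := by
    calc _ = ∑ γ ∈ F.support, monomial (γ + δ - μ)
            (coeff γ F * ∑ k ∈ T, e k * descFactorialProd (μ - δ + k) γ) := by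
          conv_lhs => rw [F.as_sum]
          simp only [pdPoly_sum, Finset.mul_sum, monomial_mul_pdPoly_monomial, Finset.smul_sum,
            smul_monomial, smul_eq_mul]
          rw [Finset.sum_comm]
          refine Finset.sum_congr rfl fun γ _ => ?_
          rw [← map_sum]
          exact congrArg _ (Finset.sum_congr rfl fun k _ => by ring)
      _ = monomial δ (coeff μ F) := by
          rw [Finset.sum_eq_single_of_mem μ hμ fun γ hγ hγμ => by rw [he γ hγ, if_neg hγμ,
            mul_zero, map_zero], he μ hμ, if_pos rfl, mul_one, add_tsub_cancel_left]
  have hμF : coeff μ F ≠ 0 := mem_support_iff.mp hμ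
  rw [show monomial δ c = (c / coeff μ F) • monomial δ (coeff μ F) by
    rw [smul_monomial, smul_eq_mul, div_mul_cancel₀ _ hμF], ← hsum]
  refine Submodule.smul_mem _ _ (Submodule.sum_mem _ fun k _ => Submodule.smul_mem _ _ ?_)
  refine Submodule.subset_span ⟨(δ - μ + k, μ - δ + k), ?_, rfl⟩
  have := weight_tsub_sub_weight_tsub ω μ δ
  simp only [Set.mem_ofPred_eq, map_add]
  linarith

end NegWeightSpan

section Euler

variable {σ : Type*} [Fintype σ]

lemma sum_C_mul_X_mul_pderiv_monomial (v : σ → ℝ) (γ : σ →₀ ℕ) (c : ℂ) :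
    ∑ j, C (v j : ℂ) * X j * pderiv j (monomial γ c) = monomial γ (c * weight v γ) := by
  have hterm : ∀ j, C (v j : ℂ) * X j * pderiv j (monomial γ c) =
      monomial γ (c * ((γ j : ℝ) * v j : ℝ)) := by
    intro j
    rw [pderiv_monomial, C_mul_X_eq_monomial, monomial_mul]
    rcases Nat.eq_zero_or_pos (γ j) with h | h
    · simp [h]
    · rw [add_tsub_cancel_of_le (Finsupp.single_le_iff.mpr h)]
      push_cast
      ring_nf
  rw [Finset.sum_congr rfl fun j _ => hterm j, ← map_sum, ← Finset.mul_sum, weight_eq_sum_mul]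
  push_cast
  rfl

lemma euler_sub_eq_sum (v : σ → ℝ) (b : ℝ) (F : MvPolynomial σ ℂ) :
    ∑ j, C (v j : ℂ) * X j * pderiv j F - C (b : ℂ) * F =
      ∑ γ ∈ F.support, monomial γ (coeff γ F * (weight v γ - b)) := by
  conv_lhs => rw [F.as_sum]
  simp only [map_sum, Finset.mul_sum]
  rw [Finset.sum_comm, ← Finset.sum_sub_distrib]
  refine Finset.sum_congr rfl fun γ _ => ?_
  rw [sum_C_mul_X_mul_pderiv_monomial, C_mul_monomial, ← map_sub]
  ring_nf

end Euler

lemma euler_sub_mem_negWeightSpan {n : ℕ} {ω v : Fin n → ℝ} {a b : ℝ}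
    {F : MvPolynomial (Fin n) ℂ} (hF : IsConstOnFace ω a v b F) {μ : Fin n →₀ ℕ}
    (hμ : μ ∈ F.support) (hμa : weight ω μ = a) :
    ∑ j, C (v j : ℂ) * X j * pderiv j F - C (b : ℂ) * F ∈ negWeightSpan ω F := by
  rw [euler_sub_eq_sum]
  refine Submodule.sum_mem _ fun γ hγ => ?_
  obtain ⟨hle, hface⟩ := hF γ hγ
  rcases hle.lt_or_eq with hlt | heq
  · exact monomial_mem_negWeightSpan hμ (hμa ▸ hlt) _
  · rw [hface heq.symm, sub_self, mul_zero, map_zero]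
    exact zero_mem _

lemma ordW_le_weight {n : ℕ} {f : MvPolynomial (Fin n) ℂ} {ω : Fin n → ℝ} {γ : Fin n →₀ ℕ}
    (hγ : γ ∈ f.support) : ordW f ω ≤ weight ω γ := by
  rw [weight_eq_sum_mul]
  exact csInf_le (f.support.finite_toSet.image _).bddBelow (Set.mem_image_of_mem _ hγ)

theorem stmt10_general (n : ℕ) (f : MvPolynomial (Fin n) ℂ) (ℓ : ℕ)
    (ω : Fin n → ℝ) (v : Fin n → ℝ)
    (hv : ∀ γ ∈ f.support, ∀ γ' ∈ f.support,
      (∑ k, (γ k : ℝ) * ω k = ordW f ω) → (∑ k, (γ' k : ℝ) * ω k = ordW f ω) →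
      ∑ k, v k * (γ k : ℝ) = ∑ k, v k * (γ' k : ℝ))
    (γτ : Fin n →₀ ℕ) (hγτ : γτ ∈ f.support)
    (hγτω : ∑ k, (γτ k : ℝ) * ω k = ordW f ω) :
    ∃ (A : Finset ((Fin n →₀ ℕ) × (Fin n →₀ ℕ))) (c : (Fin n →₀ ℕ) × (Fin n →₀ ℕ) → ℂ),
      (∀ p ∈ A, (∑ k, ω k * p.2 k) - (∑ k, ω k * p.1 k) < 0) ∧
      (∑ j, MvPolynomial.C ((v j : ℂ)) * MvPolynomial.X j * MvPolynomial.pderiv j (f ^ ℓ))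
        - MvPolynomial.C ((ℓ : ℂ) * ((∑ k, v k * (γτ k : ℝ) : ℝ) : ℂ)) * (f ^ ℓ)
        + ∑ p ∈ A, MvPolynomial.monomial p.1 (c p) * pdPoly (⇑p.2) (f ^ ℓ) = 0 := by
  simp only [mul_comm (v _), mul_comm (ω _), ← weight_eq_sum_mul] at hv hγτω ⊢
  have hface : IsConstOnFace ω (ordW f ω) v (weight v γτ) f := fun γ hγ =>
    ⟨ordW_le_weight hγ, fun hγω => hv γ hγ γτ hγτ hγω hγτω⟩
  obtain ⟨μ, hμ, hμω⟩ :=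
    exists_mem_support_pow_weight_eq (fun γ hγ => (hface γ hγ).1) hγτ hγτω ℓ
  obtain ⟨A, c, hA, hsum⟩ := exists_sum_eq_of_mem_negWeightSpan
    (neg_mem (euler_sub_mem_negWeightSpan (hface.pow ℓ) hμ hμω))
  refine ⟨A, c, fun p hp => sub_neg.mpr (hA p hp), ?_⟩
  rw [hsum]
  push_cast
  ring

/-- if `v` is constant on the face of `Γ(f)` determined by `ω`, the operator
`Σ v_j x_j ∂_j − ℓ⟨v,γ_τ⟩ + (negative (−ω,ω)-order terms)` annihilates `f^ℓ`. -/
theorem stmt10 (n : ℕ) (f : MvPolynomial (Fin n) ℂ) (hf : f ≠ 0) (ℓ : ℕ)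
    (ω : Fin n → ℝ) (hω : ω ≠ 0) (v : Fin n → ℝ)
    (hv : ∀ γ ∈ f.support, ∀ γ' ∈ f.support,
      (∑ k, (γ k : ℝ) * ω k = ordW f ω) → (∑ k, (γ' k : ℝ) * ω k = ordW f ω) →
      ∑ k, v k * (γ k : ℝ) = ∑ k, v k * (γ' k : ℝ))
    (γτ : Fin n →₀ ℕ) (hγτ : γτ ∈ f.support)
    (hγτω : ∑ k, (γτ k : ℝ) * ω k = ordW f ω) :
    ∃ (A : Finset ((Fin n →₀ ℕ) × (Fin n →₀ ℕ))) (c : (Fin n →₀ ℕ) × (Fin n →₀ ℕ) → ℂ),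
      (∀ p ∈ A, (∑ k, ω k * p.2 k) - (∑ k, ω k * p.1 k) < 0) ∧
      (∑ j, MvPolynomial.C ((v j : ℂ)) * MvPolynomial.X j * MvPolynomial.pderiv j (f ^ ℓ))
        - MvPolynomial.C ((ℓ : ℂ) * ((∑ k, v k * (γτ k : ℝ) : ℝ) : ℂ)) * (f ^ ℓ)
        + ∑ p ∈ A, MvPolynomial.monomial p.1 (c p) * pdPoly (⇑p.2) (f ^ ℓ) = 0 :=
  stmt10_general n f ℓ ω v hv γτ hγτ hγτω
end

section
/- Let f ∈ ℂ[x₁,…,xₙ] be a nonzero polynomial with f(0) = 0, and suppose the set 𝒞 = {1 ≤ i ≤ n : e_i ∈ Supp(f)} is nonempty (i.e. ord(f) = 1, where e_i is the i-th standard basis multi-index). Then there exists a polynomial-coefficient differential operator Q = Σ_{i∈𝒞} x_i ∂_i + 1 + Σ_{(α,β)∈A} c_{αβ} x^α ∂^β, with A finite and every (α,β) ∈ A satisfying |β| < |α|, such that Q • (1/f) = 0 on {x ∈ ℝⁿ : f(x) ≠ 0}. (Hence Σ_{i∈𝒞} x_i∂_i + 1 belongs to the (−e,e)-initial ideal of Ann(1/f).)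 -/
open MvPolynomial
open scoped Classical Pointwise

/-!
Put `E = ∑_{i ∈ 𝒞} xᵢ ∂ᵢ` and `g = f - E f`. Since `E` fixes the linear part of `f`, `g` has order
`≥ 2`, and `(E + 1)(1/f) = g / f²`. A first-order operator `∑ aᵢ ∂ᵢ + b` sends `1/f` to
`(b f - ∑ aᵢ ∂ᵢ f) / f²`, and all its terms have negative `(-e, e)`-weight as soon as
`ord aᵢ ≥ 2` and `ord b ≥ 1`; so it suffices to write `g = ∑ aᵢ ∂ᵢ f - b f` with such `aᵢ, b`.
Pick `j ∈ 𝒞`, so that `∂ⱼ f = c + h` with `c ≠ 0` and `ord h ≥ 1`. Then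
`c² g = g (c - h) ∂ⱼ f + h² g = g (c - h) ∂ⱼ f + h² f - h² E f`.
-/

lemma List.foldr_comp_replicate_id {α : Type*} (m : ℕ) :
    (List.replicate m (id : α → α)).foldr (· ∘ ·) id = id := by
  induction m with
  | zero => rfl
  | succ m ih => simp [List.replicate_succ, ih]

lemma List.foldr_comp_ofFn_ite {α : Type*} {m : ℕ} (i : Fin m) (T : α → α) :
    (List.ofFn fun k => if k = i then T else id).foldr (· ∘ ·) id = T := by
  induction m with
  | zero => exact i.elim0
  | succ m ih =>
    rcases Fin.eq_zero_or_eq_succ i with rfl | ⟨i, rfl⟩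
    · simp [List.ofFn_succ, Fin.succ_ne_zero, List.foldr_comp_replicate_id]
    · simp [List.ofFn_succ, (Fin.succ_ne_zero i).symm, ih]

section Calculus
variable {n : ℕ}

lemma pdIter_zero (φ : (Fin n → ℝ) → ℂ) : pdIter 0 φ = φ := by
  simp [pdIter, List.foldr_comp_replicate_id]

lemma pdIter_single (i : Fin n) (φ : (Fin n → ℝ) → ℂ) : pdIter (Pi.single i 1) φ = pd i φ := by
  have h : (fun k => (pd k)^[(Pi.single i 1 : Fin n → ℕ) k])
      = fun k => if k = i then pd i else id := by
    funext k
    by_cases hk : k = i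
    · subst hk
      simp
    · simp [hk]
  rw [pdIter, h, List.foldr_comp_ofFn_ite]

lemma differentiable_evalR (f : MvPolynomial (Fin n) ℂ) : Differentiable ℝ (evalR f) := by
  have h := AnalyticOnNhd.eval_continuousLinearMap' (fun i => Complex.ofRealCLM.comp
    (ContinuousLinearMap.proj (R := ℝ) (φ := fun _ : Fin n => ℝ) i)) f
  exact fun x => (h x (Set.mem_univ x)).differentiableAt

lemma pd_evalR (f : MvPolynomial (Fin n) ℂ) (i : Fin n) :
    pd i (evalR f) = evalR (pderiv i f) := by
  funext x
  induction f using MvPolynomial.induction_on with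
  | C a =>
    have h : evalR (n := n) (C a) = fun _ => a := funext fun y => by simp [evalR]
    simp [pd, h, evalR]
  | add p q hp hq =>
    have h : evalR (p + q) = evalR p + evalR q := funext fun y => by simp [evalR]
    rw [pd, h, fderiv_add (differentiable_evalR p x) (differentiable_evalR q x)]
    simp_all [pd, evalR]
  | mul_X p k hp =>
    have hX : evalR (X k : MvPolynomial (Fin n) ℂ) =
        Complex.ofRealCLM.comp (ContinuousLinearMap.proj k) := funext fun y => by simp [evalR]
    have h : evalR (p * X k) = evalR p * evalR (X k) := funext fun y => by simp [evalR]
    rw [pd, h, fderiv_mul (differentiable_evalR p x) (differentiable_evalR _ x), hX,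
      ContinuousLinearMap.fderiv]
    simp_all [pd, evalR, pderiv_X, Pi.single_apply]
    split_ifs <;> simp

lemma pd_inv {g : (Fin n → ℝ) → ℂ} {x : Fin n → ℝ} (i : Fin n) (hg : DifferentiableAt ℝ g x)
    (hx : g x ≠ 0) : pd i (fun y => (g y)⁻¹) x = -pd i g x / g x ^ 2 := by
  have h : HasFDerivAt (fun y => (g y)⁻¹) _ x :=
    (hasFDerivAt_inv' (𝕜 := ℝ) hx).comp x hg.hasFDerivAt
  rw [pd, h.fderiv, pd]
  simp only [ContinuousLinearMap.comp_apply, neg_apply, ContinuousLinearMap.mulLeftRight_apply]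
  field_simp

lemma sum_mul_pd_inv_evalR (f : MvPolynomial (Fin n) ℂ) (s : Finset (Fin n)) (u : Fin n → ℂ)
    {x : Fin n → ℝ} (hx : evalR f x ≠ 0) :
    ∑ i ∈ s, u i * pd i (fun y => (evalR f y)⁻¹) x
      = -(∑ i ∈ s, u i * evalR (pderiv i f) x) / evalR f x ^ 2 := by
  simp only [pd_inv _ (differentiable_evalR f x) hx, pd_evalR, neg_div,
    ← Finset.sum_neg_distrib, Finset.sum_div, mul_neg, mul_div_assoc]

end Calculus

lemma Finsupp.degree_eq_one_iff {σ : Type*} (x : σ →₀ ℕ) :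
    x.degree = 1 ↔ ∃ k, x = Finsupp.single k 1 := by
  have h := Set.ext_iff.mp (Finsupp.nsmul_single_one_image (n := 1) (s := (Set.univ : Set σ))) x
  simpa [eq_comm] using h.symm

namespace MvPolynomial
variable {σ R : Type*} [CommRing R]

lemma mem_idealOfVars_of_coeff_zero {p : MvPolynomial σ R} (h : coeff 0 p = 0) :
    p ∈ idealOfVars σ R := by
  rw [← pow_one (idealOfVars σ R), mem_pow_idealOfVars_iff']
  intro x hx
  rwa [(Finsupp.degree_eq_zero_iff x).mp (Nat.lt_one_iff.mp hx)]

lemma coeff_single_one_X_mul (p : MvPolynomial σ R) (i k : σ) :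
    coeff (Finsupp.single k 1) (X i * p) = if i = k then coeff 0 p else 0 := by
  rw [coeff_X_mul']
  rcases eq_or_ne i k with rfl | hik
  · simp
  · simp [hik]

lemma sub_sum_X_mul_pderiv_mem_sq {f : MvPolynomial σ R} (h0 : coeff 0 f = 0) (s : Finset σ)
    (hs : ∀ i ∉ s, coeff (Finsupp.single i 1) f = 0) :
    f - ∑ i ∈ s, X i * pderiv i f ∈ idealOfVars σ R ^ 2 := by
  rw [mem_pow_idealOfVars_iff']
  intro x hx
  obtain hx | hx : x.degree = 0 ∨ x.degree = 1 := by omega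
  · rw [(Finsupp.degree_eq_zero_iff x).mp hx]
    simp [h0, coeff_sum, coeff_X_mul']
  · obtain ⟨k, rfl⟩ := (Finsupp.degree_eq_one_iff x).mp hx
    simp only [coeff_sub, coeff_sum, coeff_single_one_X_mul, Finset.sum_ite_eq', coeff_pderiv]
    by_cases hk : k ∈ s
    · simp [hk]
    · simp [hk, hs k hk]

lemma exists_eq_sum_mul_pderiv_sub_mul {K : Type*} [Field K] [Fintype σ] {f : MvPolynomial σ K}
    (s : Finset σ) {j : σ} (hj : coeff (Finsupp.single j 1) f ≠ 0)
    (hg : f - ∑ i ∈ s, X i * pderiv i f ∈ idealOfVars σ K ^ 2) :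
    ∃ (a : σ → MvPolynomial σ K) (b : MvPolynomial σ K),
      (∀ i, a i ∈ idealOfVars σ K ^ 2) ∧ b ∈ idealOfVars σ K ∧
      f - ∑ i ∈ s, X i * pderiv i f = ∑ i, a i * pderiv i f - b * f := by
  set c := coeff (Finsupp.single j 1) f
  set g := f - ∑ i ∈ s, X i * pderiv i f with hg_def
  set h := pderiv j f - C c with hh_def
  have hh : h ∈ idealOfVars σ K := mem_idealOfVars_of_coeff_zero (by simp [h, coeff_pderiv, c])
  have hh2 : h ^ 2 ∈ idealOfVars σ K ^ 2 := Ideal.pow_mem_pow hh 2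
  refine ⟨fun i => C (c ^ 2)⁻¹ * ((if i = j then g * (C c - h) else 0)
      - h ^ 2 * (if i ∈ s then X i else 0)), -(C (c ^ 2)⁻¹ * h ^ 2), fun i => ?_, ?_, ?_⟩
  · refine Ideal.mul_mem_left _ _ (Ideal.sub_mem _ ?_ (Ideal.mul_mem_right _ _ hh2))
    split_ifs
    · exact Ideal.mul_mem_right _ _ hg
    · exact Ideal.zero_mem _
  · exact neg_mem (Ideal.mul_mem_left _ _ (Ideal.pow_le_self two_ne_zero hh2))
  · have hc : C (c ^ 2)⁻¹ * C c ^ 2 = (1 : MvPolynomial σ K) := by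
      rw [← map_pow, ← C_mul, inv_mul_cancel₀ (pow_ne_zero 2 hj), C_1]
    have hE : ∑ i ∈ s, C (c ^ 2)⁻¹ * (h ^ 2 * X i) * pderiv i f
        = C (c ^ 2)⁻¹ * h ^ 2 * (f - g) := by
      simp only [hg_def, sub_sub_cancel, Finset.mul_sum]
      exact Finset.sum_congr rfl fun i _ => by ring
    simp only [mul_sub, sub_mul, Finset.sum_sub_distrib, mul_ite, mul_zero, ite_mul, zero_mul,
      Finset.sum_ite_eq', Finset.mem_univ, if_true, Finset.sum_ite_mem, Finset.univ_inter]
    rw [hE, hh_def]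
    linear_combination (-g) * hc

end MvPolynomial

section NegWeight
variable {n : ℕ}

/-- The monomial operator `x^α ∂^β` has `(-e, e)`-weight `|β| - |α|`; these are the operators that
are finite combinations of monomial operators of negative weight. -/
def IsNegWeightOperator (D : ((Fin n → ℝ) → ℂ) → (Fin n → ℝ) → ℂ) : Prop :=
  ∃ (A : Finset ((Fin n → ℕ) × (Fin n → ℕ))) (c : (Fin n → ℕ) × (Fin n → ℕ) → ℂ),
    (∀ p ∈ A, ∑ i, p.2 i < ∑ i, p.1 i) ∧
    ∀ φ x, D φ x = ∑ p ∈ A, c p * (∏ i, (x i : ℂ) ^ p.1 i) * pdIter p.2 φ x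

lemma isNegWeightOperator_zero : IsNegWeightOperator (n := n) fun _ _ => 0 :=
  ⟨∅, 0, by simp, by simp⟩

lemma IsNegWeightOperator.add {D E : ((Fin n → ℝ) → ℂ) → (Fin n → ℝ) → ℂ}
    (hD : IsNegWeightOperator D) (hE : IsNegWeightOperator E) :
    IsNegWeightOperator fun φ x => D φ x + E φ x := by
  obtain ⟨A, c, hA, hDc⟩ := hD
  obtain ⟨B, d, hB, hEd⟩ := hE
  refine ⟨A ∪ B, fun p => (if p ∈ A then c p else 0) + (if p ∈ B then d p else 0), ?_, ?_⟩
  · intro p hp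
    exact (Finset.mem_union.mp hp).elim (hA p) (hB p)
  · intro φ x
    simp only [add_mul, ite_mul, zero_mul, Finset.sum_add_distrib, Finset.sum_ite_mem,
      Finset.union_inter_cancel_left, Finset.union_inter_cancel_right, hDc, hEd]

lemma isNegWeightOperator_sum {ι : Type*} (s : Finset ι)
    {D : ι → ((Fin n → ℝ) → ℂ) → (Fin n → ℝ) → ℂ} (hD : ∀ i ∈ s, IsNegWeightOperator (D i)) :
    IsNegWeightOperator fun φ x => ∑ i ∈ s, D i φ x := by
  induction s using Finset.induction_on with
  | empty => simpa using isNegWeightOperator_zero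
  | insert i s hi ih =>
    simp only [Finset.sum_insert hi]
    exact (hD i (Finset.mem_insert_self i s)).add
      (ih fun k hk => hD k (Finset.mem_insert_of_mem hk))

lemma isNegWeightOperator_evalR_mul_pdIter {P : MvPolynomial (Fin n) ℂ} {β : Fin n → ℕ}
    (hP : P ∈ idealOfVars (Fin n) ℂ ^ (∑ i, β i + 1)) :
    IsNegWeightOperator fun φ x => evalR P x * pdIter β φ x := by
  refine ⟨P.support.image fun γ : Fin n →₀ ℕ => ((γ : Fin n → ℕ), β),
    fun p => coeff (Finsupp.equivFunOnFinite.symm p.1) P, ?_, fun φ x => ?_⟩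
  · intro p hp
    obtain ⟨γ, hγ, rfl⟩ := Finset.mem_image.mp hp
    have hγβ := (mem_pow_idealOfVars_iff (∑ i, β i + 1) P).mp hP γ hγ
    rw [Finsupp.degree_eq_sum] at hγβ
    exact hγβ
  · rw [Finset.sum_image fun γ _ δ _ h => DFunLike.coe_injective (congrArg Prod.fst h)]
    simp only [evalR, eval_eq', Finset.sum_mul, Finsupp.equivFunOnFinite_symm_coe]

lemma isNegWeightOperator_firstOrder {a : Fin n → MvPolynomial (Fin n) ℂ}
    {b : MvPolynomial (Fin n) ℂ} (ha : ∀ i, a i ∈ idealOfVars (Fin n) ℂ ^ 2)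
    (hb : b ∈ idealOfVars (Fin n) ℂ) :
    IsNegWeightOperator fun φ x => ∑ i, evalR (a i) x * pd i φ x + evalR b x * φ x := by
  refine (isNegWeightOperator_sum Finset.univ fun i _ => ?_).add ?_
  · simpa [pdIter_single] using
      isNegWeightOperator_evalR_mul_pdIter (β := Pi.single i 1) (P := a i) (by simpa using ha i)
  · simpa [pdIter_zero] using
      isNegWeightOperator_evalR_mul_pdIter (β := 0) (P := b) (by simpa using hb)

end NegWeight

theorem stmt15_general (n : ℕ) (f : MvPolynomial (Fin n) ℂ)
    (h0 : MvPolynomial.coeff 0 f = 0)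
    (hC : (Finset.univ.filter (fun i : Fin n => Finsupp.single i 1 ∈ f.support)).Nonempty) :
    ∃ (A : Finset ((Fin n → ℕ) × (Fin n → ℕ))) (c : (Fin n → ℕ) × (Fin n → ℕ) → ℂ),
      (∀ p ∈ A, ∑ i, p.2 i < ∑ i, p.1 i) ∧
      ∀ x : Fin n → ℝ, evalR f x ≠ 0 →
        (∑ i ∈ Finset.univ.filter (fun i : Fin n => Finsupp.single i 1 ∈ f.support),
            (x i : ℂ) * pd i (fun y => (evalR f y)⁻¹) x)
          + (evalR f x)⁻¹
          + ∑ p ∈ A, c p * (∏ i, (x i : ℂ) ^ p.1 i) *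
              pdIter p.2 (fun y => (evalR f y)⁻¹) x = 0 := by
  set 𝒞 := Finset.univ.filter (fun i : Fin n => Finsupp.single i 1 ∈ f.support)
  obtain ⟨j, hj⟩ := hC
  have hg := sub_sum_X_mul_pderiv_mem_sq h0 𝒞 fun i hi => by simpa [𝒞] using hi
  obtain ⟨a, b, ha, hb, hab⟩ := exists_eq_sum_mul_pderiv_sub_mul 𝒞 (by simpa [𝒞] using hj) hg
  obtain ⟨A, c, hA, hQ⟩ := isNegWeightOperator_firstOrder ha hb
  refine ⟨A, c, hA, fun x hx => ?_⟩
  have habx := congrArg (evalR · x) hab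
  rw [← hQ]
  beta_reduce
  rw [sum_mul_pd_inv_evalR f _ _ hx, sum_mul_pd_inv_evalR f _ _ hx]
  simp only [evalR, map_sub, map_sum, map_mul, eval_X] at habx hx ⊢
  field_simp
  linear_combination habx

/-- if `ord(f) = 1` (i.e. `f(0) = 0` and some `e_i ∈ Supp(f)`), then
`Σ_{i∈𝒞} x_i ∂_i + 1` is the `(−e,e)`-initial form of an operator annihilating `1/f`. -/
theorem stmt15 (n : ℕ) (f : MvPolynomial (Fin n) ℂ) (hf : f ≠ 0)
    (h0 : MvPolynomial.coeff 0 f = 0)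
    (hC : (Finset.univ.filter (fun i : Fin n => Finsupp.single i 1 ∈ f.support)).Nonempty) :
    ∃ (A : Finset ((Fin n → ℕ) × (Fin n → ℕ))) (c : (Fin n → ℕ) × (Fin n → ℕ) → ℂ),
      (∀ p ∈ A, ∑ i, p.2 i < ∑ i, p.1 i) ∧
      ∀ x : Fin n → ℝ, evalR f x ≠ 0 →
        (∑ i ∈ Finset.univ.filter (fun i : Fin n => Finsupp.single i 1 ∈ f.support),
            (x i : ℂ) * pd i (fun y => (evalR f y)⁻¹) x)
          + (evalR f x)⁻¹
          + ∑ p ∈ A, c p * (∏ i, (x i : ℂ) ^ p.1 i) *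
              pdIter p.2 (fun y => (evalR f y)⁻¹) x = 0 :=
  stmt15_general n f h0 hC
end
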